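/- arXiv:1207.5925 — 2 statements merged into one kernel-verified Lean document; each statement's English description precedes it below -/
import Mathlib

section
/- Let d ≥ 1, let α = (α₁,…,α_d) with each α_j ∈ (0,1), and let T, C₁, C₂, σ₁, σ₂ > 0. Then there exist constants K, δ, ε > 0 with ε < min_j min(α_j, 1−α_j) such that for every ξ ∈ ℝ^d, every t ∈ (0,T], and every strictly positive continuous integrable u : ℝ^d → (0,∞) with ∫u = 1 satisfying C₁ G_{σ₁}(t, x−ξ) ≤ u(x) ≤ C₂ G_{σ₂}(t, x−ξ) for all x ∈ ℝ^d, the following three properties hold: (a) u(x) ≥ δ t^{−d/2} whenever max_j |x_j − ξ_j| ≤ 2K√t; (b) |Q_α^j(u) − ξ_j| ≤ K√t for every j = 1,…,d; (c) ∫_{{x : max_j |x_j − ξ_j| ≥ K√t}} u(x) dx ≤ ε. -/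
open MeasureTheory Real Set

/-- The heat kernel of the standard heat equation in `ℝ^d` with diffusion coefficient `σ`:
`G_σ(t,x) = (2π t σ²)^{-d/2} exp(-|x|²/(2tσ²))`. -/
noncomputable def heatKernel (d : ℕ) (σ t : ℝ) (x : EuclideanSpace ℝ (Fin d)) : ℝ :=
  (2 * π * t * σ ^ 2) ^ (-(d : ℝ) / 2) * Real.exp (-‖x‖ ^ 2 / (2 * t * σ ^ 2))

/-!
The Gaussian upper bound controls the mass of `u` in the slab `{K√t ≤ |x_j - ξ_j|}` by
`C₂ 2^{d/2} exp(-K²/(4σ₂²))`, independently of `t` by parabolic scaling; a union bound over the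
coordinates makes the mass outside the cube of half-side `K√t` smaller than any `ε` once `K` is
large. A quantile `Q_α^j` farther than `K√t` from `ξ_j` would put one of the half-spaces
`{x_j ≤ Q_α^j}`, `{x_j > Q_α^j}`, of mass `α_j` and `1 - α_j`, inside that tail. The lower
bound on the cube of half-side `2K√t` is the Gaussian lower bound, since `|x - ξ|² ≤ 4dK²t` there.
-/

section Tail

variable {Ω : Type*} [MeasurableSpace Ω] {μ : Measure Ω} {f : Ω → ℝ}

lemma setIntegral_iUnion_le_sum {ι : Type*} [Fintype ι] (hf : ∀ x, 0 ≤ f x)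
    (hfi : Integrable f μ) (s : ι → Set Ω) :
    ∫ x in ⋃ i, s i, f x ∂μ ≤ ∑ i, ∫ x in s i, f x ∂μ := by
  have hfi_sum : Integrable f (Measure.sum fun i => μ.restrict (s i)) := by
    rw [Measure.sum_fintype]
    exact integrable_finsetSum_measure.2 fun i _ => hfi.integrableOn
  calc ∫ x in ⋃ i, s i, f x ∂μ ≤ ∫ x, f x ∂(Measure.sum fun i => μ.restrict (s i)) :=
        integral_mono_measure Measure.restrict_iUnion_le (ae_of_all _ hf) hfi_sum
    _ = ∑ i, ∫ x in s i, f x ∂μ := by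
        rw [Measure.sum_fintype, integral_finsetSum_measure fun i _ => hfi.integrableOn]

lemma abs_sub_le_of_setIntegral_tail_lt {g : Ω → ℝ} (hf : ∀ x, 0 ≤ f x) (hfi : Integrable f μ)
    (hf_one : ∫ x, f x ∂μ = 1) (hg : Measurable g) {a c q r : ℝ}
    (hq : ∫ x in {x | g x ≤ q}, f x ∂μ = a)
    (htail : ∫ x in {x | r ≤ |g x - c|}, f x ∂μ < min a (1 - a)) :
    |q - c| ≤ r := by
  have le_tail : ∀ s ⊆ {x | r ≤ |g x - c|}, ∫ x in s, f x ∂μ ≤ ∫ x in {x | r ≤ |g x - c|}, f x ∂μ :=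
    fun s hs => setIntegral_mono_set hfi.integrableOn (ae_of_all _ hf) hs.eventuallyLE
  by_contra! hr
  rcases lt_abs.mp hr with hr | hr
  · have hmass := le_tail {x | g x ≤ q}ᶜ fun x hx => by
      have : q < g x := not_le.mp hx
      exact (show r ≤ g x - c by linarith).trans (le_abs_self _)
    rw [setIntegral_compl (measurableSet_le hg measurable_const) hfi, hf_one, hq] at hmass
    linarith [min_le_right a (1 - a)]
  · have hmass := le_tail {x | g x ≤ q} fun x (hx : g x ≤ q) =>
      (show r ≤ -(g x - c) by linarith).trans (neg_le_abs _)
    rw [hq] at hmass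
    linarith [min_le_left a (1 - a)]

end Tail

section HeatKernel

variable {d : ℕ} {σ t : ℝ}

lemma heatKernel_nonneg (ht : 0 ≤ t) (y : EuclideanSpace ℝ (Fin d)) : 0 ≤ heatKernel d σ t y := by
  unfold heatKernel
  positivity

lemma integral_heatKernel (hσ : σ ≠ 0) (ht : 0 < t) :
    ∫ y, heatKernel d σ t y = 1 := by
  have ha : 0 < 2 * π * t * σ ^ 2 := by positivity
  have hb : 0 < (2 * t * σ ^ 2)⁻¹ := by positivity
  have hform : heatKernel d σ t = fun y =>
      (2 * π * t * σ ^ 2) ^ (-(d : ℝ) / 2) * exp (-(2 * t * σ ^ 2)⁻¹ * ‖y‖ ^ 2) := by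
    ext y
    simp only [heatKernel, neg_mul, mul_neg, div_eq_inv_mul]
  rw [hform, integral_const_mul, GaussianFourier.integral_rexp_neg_mul_sq_norm hb,
    finrank_euclideanSpace_fin,
    div_inv_eq_mul, show π * (2 * t * σ ^ 2) = 2 * π * t * σ ^ 2 by ring, neg_div, rpow_neg ha.le,
    inv_mul_cancel₀ (rpow_pos_of_pos ha _).ne']

lemma integrable_heatKernel (hσ : σ ≠ 0) (ht : 0 < t) :
    Integrable (heatKernel d σ t) :=
  Integrable.of_integral_ne_zero (by rw [integral_heatKernel hσ ht]; exact one_ne_zero)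

/-- Half of the Gaussian decay pays for the tail factor, the other half is the kernel at time
`2t`. -/
lemma heatKernel_le_of_sq_le_norm_sq (ht : 0 < t) {r : ℝ} {y : EuclideanSpace ℝ (Fin d)}
    (hy : r ^ 2 ≤ ‖y‖ ^ 2) :
    heatKernel d σ t y ≤
      2 ^ ((d : ℝ) / 2) * exp (-r ^ 2 / (4 * t * σ ^ 2)) * heatKernel d σ (2 * t) y := by
  have hexp : -‖y‖ ^ 2 / (2 * t * σ ^ 2) ≤
      -r ^ 2 / (4 * t * σ ^ 2) + -‖y‖ ^ 2 / (2 * (2 * t) * σ ^ 2) := by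
    rw [show -‖y‖ ^ 2 / (2 * t * σ ^ 2) = -‖y‖ ^ 2 / (4 * t * σ ^ 2) + -‖y‖ ^ 2 / (4 * t * σ ^ 2)
      by ring, show 2 * (2 * t) * σ ^ 2 = 4 * t * σ ^ 2 by ring]
    gcongr
  have hscale : 2 ^ ((d : ℝ) / 2) * (2 * π * (2 * t) * σ ^ 2) ^ (-(d : ℝ) / 2) =
      (2 * π * t * σ ^ 2) ^ (-(d : ℝ) / 2) := by
    rw [show 2 * π * (2 * t) * σ ^ 2 = 2 * (2 * π * t * σ ^ 2) by ring,
      mul_rpow zero_le_two (by positivity), ← mul_assoc, ← rpow_add zero_lt_two,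
      show (d : ℝ) / 2 + -(d : ℝ) / 2 = 0 by ring, rpow_zero, one_mul]
  calc heatKernel d σ t y
      ≤ (2 * π * t * σ ^ 2) ^ (-(d : ℝ) / 2) *
          (exp (-r ^ 2 / (4 * t * σ ^ 2)) * exp (-‖y‖ ^ 2 / (2 * (2 * t) * σ ^ 2))) := by
        rw [heatKernel, ← exp_add]
        gcongr
    _ = _ := by rw [heatKernel, ← hscale]; ring

lemma setIntegral_heatKernel_sub_tail_le (hσ : σ ≠ 0) (ht : 0 < t) (ξ : EuclideanSpace ℝ (Fin d))
    (j : Fin d) {r : ℝ} (hr : 0 ≤ r) :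
    ∫ x in {x : EuclideanSpace ℝ (Fin d) | r ≤ |x j - ξ j|}, heatKernel d σ t (x - ξ) ≤
      2 ^ ((d : ℝ) / 2) * exp (-r ^ 2 / (4 * t * σ ^ 2)) := by
  set c := 2 ^ ((d : ℝ) / 2) * exp (-r ^ 2 / (4 * t * σ ^ 2))
  have hint₁ := (integrable_heatKernel (d := d) hσ ht).comp_sub_right ξ
  have hint₂ := ((integrable_heatKernel (d := d) hσ (by positivity : 0 < 2 * t)).comp_sub_right
    ξ).const_mul c
  have hS : MeasurableSet {x : EuclideanSpace ℝ (Fin d) | r ≤ |x j - ξ j|} :=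
    measurableSet_le measurable_const (by fun_prop)
  calc ∫ x in {x : EuclideanSpace ℝ (Fin d) | r ≤ |x j - ξ j|}, heatKernel d σ t (x - ξ)
      ≤ ∫ x in {x : EuclideanSpace ℝ (Fin d) | r ≤ |x j - ξ j|},
          c * heatKernel d σ (2 * t) (x - ξ) := by
        refine setIntegral_mono_on hint₁.integrableOn hint₂.integrableOn hS fun x hx => ?_
        refine heatKernel_le_of_sq_le_norm_sq ht ?_
        calc r ^ 2 ≤ |x j - ξ j| ^ 2 := pow_le_pow_left₀ hr hx 2
          _ ≤ ‖x - ξ‖ ^ 2 := by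
            gcongr
            simpa [Real.norm_eq_abs] using PiLp.norm_apply_le (x - ξ) j
    _ ≤ ∫ x, c * heatKernel d σ (2 * t) (x - ξ) :=
        setIntegral_le_integral hint₂ (ae_of_all _ fun x =>
          mul_nonneg (by positivity) (heatKernel_nonneg (by positivity) _))
    _ = c := by
        rw [integral_const_mul, integral_sub_right_eq_self (heatKernel d σ (2 * t)) ξ,
          integral_heatKernel hσ (by positivity), mul_one]

end HeatKernel

section Density

variable {d : ℕ} {σ t : ℝ}

lemma norm_sq_le_card_mul_of_forall_abs_le {ι : Type*} [Fintype ι] {y : EuclideanSpace ℝ ι}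
    {r : ℝ} (hy : ∀ j, |y j| ≤ r) : ‖y‖ ^ 2 ≤ Fintype.card ι * r ^ 2 := by
  rw [EuclideanSpace.real_norm_sq_eq]
  calc ∑ j, y j ^ 2 ≤ ∑ _j : ι, r ^ 2 :=
        Finset.sum_le_sum fun j _ => sq_abs (y j) ▸ pow_le_pow_left₀ (abs_nonneg _) (hy j) 2
    _ = Fintype.card ι * r ^ 2 := by simp

lemma heatKernel_ge_of_norm_sq_le (hσ : σ ≠ 0) (ht : 0 < t) {s : ℝ}
    {y : EuclideanSpace ℝ (Fin d)} (hy : ‖y‖ ^ 2 ≤ s * t) :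
    (2 * π * σ ^ 2) ^ (-(d : ℝ) / 2) * exp (-s / (2 * σ ^ 2)) * t ^ (-(d : ℝ) / 2) ≤
      heatKernel d σ t y := by
  have hexp : -s / (2 * σ ^ 2) ≤ -‖y‖ ^ 2 / (2 * t * σ ^ 2) := by
    rw [neg_div, neg_div, neg_le_neg_iff,
      show s / (2 * σ ^ 2) = s * t / (2 * t * σ ^ 2) by field_simp]
    gcongr
  rw [heatKernel, show 2 * π * t * σ ^ 2 = 2 * π * σ ^ 2 * t by ring,
    mul_rpow (by positivity) ht.le, mul_right_comm]
  gcongr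

lemma setIntegral_tail_le_of_le_heatKernel {C K : ℝ} (hC : 0 ≤ C) (hσ : σ ≠ 0) (ht : 0 < t)
    (hK : 0 ≤ K) (ξ : EuclideanSpace ℝ (Fin d)) {u : EuclideanSpace ℝ (Fin d) → ℝ}
    (hu_nonneg : ∀ x, 0 ≤ u x) (hu : Integrable u)
    (hu_le : ∀ x, u x ≤ C * heatKernel d σ t (x - ξ)) :
    ∫ x in {x : EuclideanSpace ℝ (Fin d) | ∃ j, K * √t ≤ |x j - ξ j|}, u x ≤
      d * C * 2 ^ ((d : ℝ) / 2) * exp (-K ^ 2 / (4 * σ ^ 2)) := by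
  have hslab : ∀ j, ∫ x in {x : EuclideanSpace ℝ (Fin d) | K * √t ≤ |x j - ξ j|}, u x ≤
      C * (2 ^ ((d : ℝ) / 2) * exp (-K ^ 2 / (4 * σ ^ 2))) := fun j => by
    have hG := ((integrable_heatKernel (d := d) hσ ht).comp_sub_right ξ).const_mul C
    have hS : MeasurableSet {x : EuclideanSpace ℝ (Fin d) | K * √t ≤ |x j - ξ j|} :=
      measurableSet_le measurable_const (by fun_prop)
    have hKt : (K * √t) ^ 2 / (4 * t * σ ^ 2) = K ^ 2 / (4 * σ ^ 2) := by
      rw [mul_pow, sq_sqrt ht.le]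
      field_simp
    calc _ ≤ ∫ x in {x : EuclideanSpace ℝ (Fin d) | K * √t ≤ |x j - ξ j|},
          C * heatKernel d σ t (x - ξ) :=
          setIntegral_mono_on hu.integrableOn hG.integrableOn hS fun x _ => hu_le x
      _ ≤ _ := by
          rw [integral_const_mul, neg_div, ← hKt, ← neg_div]
          exact mul_le_mul_of_nonneg_left
            (setIntegral_heatKernel_sub_tail_le hσ ht ξ j (by positivity)) hC
  have hunion : {x : EuclideanSpace ℝ (Fin d) | ∃ j, K * √t ≤ |x j - ξ j|} =
      ⋃ j, {x | K * √t ≤ |x j - ξ j|} := by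
    ext x
    simp
  calc _ ≤ ∑ j, ∫ x in {x : EuclideanSpace ℝ (Fin d) | K * √t ≤ |x j - ξ j|}, u x := by
        rw [hunion]
        exact setIntegral_iUnion_le_sum hu_nonneg hu _
    _ ≤ ∑ _j : Fin d, C * (2 ^ ((d : ℝ) / 2) * exp (-K ^ 2 / (4 * σ ^ 2))) :=
        Finset.sum_le_sum fun j _ => hslab j
    _ = _ := by simp only [Finset.sum_const, Finset.card_univ, Fintype.card_fin, nsmul_eq_mul]; ring

end Density

theorem quantile_localization_dirac_initial_general
    (d : ℕ)
    (α : Fin d → ℝ) (hα : ∀ j, α j ∈ Ioo (0 : ℝ) 1)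
    (T C₁ C₂ σ₁ σ₂ : ℝ) (hC₁ : 0 < C₁) (hC₂ : 0 < C₂)
    (hσ₁ : 0 < σ₁) (hσ₂ : 0 < σ₂) :
    ∃ K δ ε : ℝ, 0 < K ∧ 0 < δ ∧ 0 < ε ∧ (∀ j, ε < min (α j) (1 - α j)) ∧
      ∀ ξ : EuclideanSpace ℝ (Fin d), ∀ t ∈ Ioc (0 : ℝ) T,
        ∀ u : EuclideanSpace ℝ (Fin d) → ℝ,
        Continuous u → (∀ x, 0 < u x) → Integrable u → (∫ x, u x) = 1 →
        (∀ x, C₁ * heatKernel d σ₁ t (x - ξ) ≤ u x) →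
        (∀ x, u x ≤ C₂ * heatKernel d σ₂ t (x - ξ)) →
        ((∀ x : EuclideanSpace ℝ (Fin d),
            (∀ j, |x j - ξ j| ≤ 2 * K * Real.sqrt t) → δ * t ^ (-(d : ℝ) / 2) ≤ u x) ∧
          (∀ q : Fin d → ℝ,
            (∀ j, ∫ x in {x : EuclideanSpace ℝ (Fin d) | x j ≤ q j}, u x = α j) →
            ∀ j, |q j - ξ j| ≤ K * Real.sqrt t) ∧
          ∫ x in {x : EuclideanSpace ℝ (Fin d) | ∃ j, K * Real.sqrt t ≤ |x j - ξ j|},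
            u x ≤ ε) := by
  obtain ⟨ε, hε, hεα⟩ : ∃ ε, 0 < ε ∧ ∀ j, ε < min (α j) (1 - α j) :=
    ((eventually_mem_nhdsWithin (a := 0) (s := Ioi 0)).and
      (eventually_nhdsWithin_of_eventually_nhds (Filter.eventually_all.2 fun j =>
        eventually_lt_nhds (lt_min (hα j).1 (sub_pos.2 (hα j).2))))).exists
  obtain ⟨K, hKε, hK⟩ : ∃ K, d * C₂ * 2 ^ ((d : ℝ) / 2) * exp (-K ^ 2 / (4 * σ₂ ^ 2)) ≤ ε ∧
      0 < K := by
    have hdecay : Filter.Tendsto (fun K : ℝ => d * C₂ * 2 ^ ((d : ℝ) / 2) *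
        exp (-K ^ 2 / (4 * σ₂ ^ 2))) Filter.atTop (nhds 0) := by
      simpa only [Function.comp_def, neg_div, mul_zero] using (tendsto_exp_neg_atTop_nhds_zero.comp
        ((Filter.tendsto_pow_atTop two_ne_zero).atTop_div_const (by positivity))).const_mul _
    exact ((hdecay.eventually (ge_mem_nhds hε)).and (Filter.eventually_gt_atTop 0)).exists
  refine ⟨K, C₁ * ((2 * π * σ₁ ^ 2) ^ (-(d : ℝ) / 2) * exp (-(4 * K ^ 2 * d) / (2 * σ₁ ^ 2))),
    ε, hK, by positivity, hε, hεα, fun ξ t ht u _ hu_pos hu_int hu_one hu_ge hu_le => ?_⟩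
  have htail := (setIntegral_tail_le_of_le_heatKernel hC₂.le hσ₂.ne' ht.1 hK.le ξ
    (fun x => (hu_pos x).le) hu_int hu_le).trans hKε
  refine ⟨fun x hx => ?_, fun q hq j => ?_, htail⟩
  · have hnorm : ‖x - ξ‖ ^ 2 ≤ 4 * K ^ 2 * d * t :=
      (norm_sq_le_card_mul_of_forall_abs_le hx).trans_eq
        (by rw [Fintype.card_fin, mul_pow, mul_pow, sq_sqrt ht.1.le]; ring)
    calc _ = C₁ * ((2 * π * σ₁ ^ 2) ^ (-(d : ℝ) / 2) * exp (-(4 * K ^ 2 * d) / (2 * σ₁ ^ 2)) *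
          t ^ (-(d : ℝ) / 2)) := by ring
      _ ≤ u x := (mul_le_mul_of_nonneg_left (heatKernel_ge_of_norm_sq_le hσ₁.ne' ht.1 hnorm)
          hC₁.le).trans (hu_ge x)
  · refine abs_sub_le_of_setIntegral_tail_lt (fun x => (hu_pos x).le) hu_int hu_one
      (by fun_prop) (hq j) (lt_of_le_of_lt ?_ (htail.trans_lt (hεα j)))
    exact setIntegral_mono_set hu_int.integrableOn (ae_of_all _ fun x => (hu_pos x).le)
      (Filter.Eventually.of_forall fun x hx => ⟨j, hx⟩)

/-- Localization of the quantile vector for probability densities satisfying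
an Aronson-type two-sided Gaussian bound around a point `ξ` (as heat kernels started from the
Dirac measure `δ_ξ` do): there are `K, δ, ε > 0` with `ε < min_j min(α_j, 1-α_j)` such that
for every `ξ`, `t ∈ (0,T]` and every such density `u`:
(a) `u ≥ δ t^{-d/2}` on the cube `{max_j |x_j - ξ_j| ≤ 2K√t}`,
(b) every coordinate of its quantile vector lies within `K√t` of the corresponding `ξ_j`, and
(c) the mass of `u` on `{max_j |x_j - ξ_j| ≥ K√t}` is at most `ε`. -/
theorem quantile_localization_dirac_initial
    (d : ℕ) (hd : 1 ≤ d)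
    (α : Fin d → ℝ) (hα : ∀ j, α j ∈ Ioo (0 : ℝ) 1)
    (T C₁ C₂ σ₁ σ₂ : ℝ) (hT : 0 < T) (hC₁ : 0 < C₁) (hC₂ : 0 < C₂)
    (hσ₁ : 0 < σ₁) (hσ₂ : 0 < σ₂) :
    ∃ K δ ε : ℝ, 0 < K ∧ 0 < δ ∧ 0 < ε ∧ (∀ j, ε < min (α j) (1 - α j)) ∧
      ∀ ξ : EuclideanSpace ℝ (Fin d), ∀ t ∈ Ioc (0 : ℝ) T,
        ∀ u : EuclideanSpace ℝ (Fin d) → ℝ,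
        Continuous u → (∀ x, 0 < u x) → Integrable u → (∫ x, u x) = 1 →
        (∀ x, C₁ * heatKernel d σ₁ t (x - ξ) ≤ u x) →
        (∀ x, u x ≤ C₂ * heatKernel d σ₂ t (x - ξ)) →
        ((∀ x : EuclideanSpace ℝ (Fin d),
            (∀ j, |x j - ξ j| ≤ 2 * K * Real.sqrt t) → δ * t ^ (-(d : ℝ) / 2) ≤ u x) ∧
          (∀ q : Fin d → ℝ,
            (∀ j, ∫ x in {x : EuclideanSpace ℝ (Fin d) | x j ≤ q j}, u x = α j) →
            ∀ j, |q j - ξ j| ≤ K * Real.sqrt t) ∧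
          ∫ x in {x : EuclideanSpace ℝ (Fin d) | ∃ j, K * Real.sqrt t ≤ |x j - ξ j|},
            u x ≤ ε) :=
  quantile_localization_dirac_initial_general d α hα T C₁ C₂ σ₁ σ₂ hC₁ hC₂ hσ₁ hσ₂
end

section
/- Let d ≥ 1, let u₁, u₂ : ℝ^d → (0,∞) be continuous, strictly positive, integrable functions with ∫u₁ = ∫u₂ = 1, let α = (α₁,…,α_d) with each α_j ∈ (0,1), let K, δ, t > 0, let ξ ∈ ℝ^d, and fix j ∈ {1,…,d}. Assume that |Q_α^j(u₁) − ξ_j| ≤ K√t and |Q_α^j(u₂) − ξ_j| ≤ K√t, and that u₁(x) ≥ δ t^{−d/2} for every x with |x_j − ξ_j| ≤ K√t and max_{k≠j} |x_k − ξ_k| ≤ 2K√t. Then |Q_α^j(u₁) − Q_α^j(u₂)| ≤ √t ‖u₁ − u₂‖_L / (δ (4K)^{d−1}). -/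
open MeasureTheory Real Set

/-!
Both `u₁` and `u₂` give mass `α_j` to the half-space below their own `j`-th quantile, so `u₁`
gives mass at most `‖u₁ - u₂‖_L` to the slab between the two quantiles. That slab contains the
box of width `|q₁ j - q₂ j|` in direction `j` and side `4K√t` in the other directions, on which
`u₁ ≥ δ t^{-d/2}`; hence the slab has `u₁`-mass at least
`δ t^{-d/2} |q₁ j - q₂ j| (4K√t)^{d-1} = δ (4K)^{d-1} |q₁ j - q₂ j| / √t`.
-/

section QuantileGap

variable {X : Type*} [MeasurableSpace X] {μ : Measure X} {f g : X → ℝ}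

theorem setIntegral_sub_setIntegral_le_integral_abs_sub (hf : Integrable f μ)
    (hg : Integrable g μ) (s : Set X) :
    ∫ x in s, f x ∂μ - ∫ x in s, g x ∂μ ≤ ∫ x, |f x - g x| ∂μ :=
  calc ∫ x in s, f x ∂μ - ∫ x in s, g x ∂μ = ∫ x in s, (f x - g x) ∂μ :=
        (integral_sub hf.integrableOn hg.integrableOn).symm
    _ ≤ ∫ x in s, |f x - g x| ∂μ :=
        setIntegral_mono (hf.integrableOn.sub hg.integrableOn) (hf.sub hg).abs.integrableOn
          fun _ => le_abs_self _
    _ ≤ ∫ x, |f x - g x| ∂μ :=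
        setIntegral_le_integral (hf.sub hg).abs (.of_forall fun _ => abs_nonneg _)

theorem setIntegral_preimage_Ioc_eq_sub {φ : X → ℝ} (hφ : Measurable φ) (hf : Integrable f μ)
    {a b : ℝ} (hab : a ≤ b) :
    ∫ x in φ ⁻¹' Ioc a b, f x ∂μ = ∫ x in φ ⁻¹' Iic b, f x ∂μ - ∫ x in φ ⁻¹' Iic a, f x ∂μ := by
  rw [← Iic_sdiff_Iic, preimage_sdiff, setIntegral_sdiff (hφ measurableSet_Iic) hf.integrableOn
    (preimage_mono (Iic_subset_Iic.2 hab))]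

theorem setIntegral_preimage_Ioc_min_max_le_integral_abs_sub {φ : X → ℝ} (hφ : Measurable φ)
    (hf : Integrable f μ) (hg : Integrable g μ) {q₁ q₂ : ℝ}
    (hq : ∫ x in φ ⁻¹' Iic q₁, f x ∂μ = ∫ x in φ ⁻¹' Iic q₂, g x ∂μ) :
    ∫ x in φ ⁻¹' Ioc (min q₁ q₂) (max q₁ q₂), f x ∂μ ≤ ∫ x, |f x - g x| ∂μ := by
  rcases le_total q₁ q₂ with h | h
  · rw [min_eq_left h, max_eq_right h, setIntegral_preimage_Ioc_eq_sub hφ hf h, hq]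
    exact setIntegral_sub_setIntegral_le_integral_abs_sub hf hg _
  · rw [min_eq_right h, max_eq_left h, setIntegral_preimage_Ioc_eq_sub hφ hf h, hq]
    simpa only [abs_sub_comm (g _)] using setIntegral_sub_setIntegral_le_integral_abs_sub hg hf _

end QuantileGap

theorem EuclideanSpace.volume_setOf_forall_mem {ι : Type*} [Fintype ι] (s : ι → Set ℝ) :
    volume {x : EuclideanSpace ℝ ι | ∀ i, x i ∈ s i} = ∏ i, volume (s i) := by
  rw [← volume_pi_pi]
  convert (EuclideanSpace.volume_preserving_symm_measurableEquiv_toLp ι).measure_preimage_equiv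
    (univ.pi s) using 2
  ext x
  simp

theorem EuclideanSpace.measurableSet_setOf_forall_mem {ι : Type*} [Fintype ι] {s : ι → Set ℝ}
    (hs : ∀ i, MeasurableSet (s i)) : MeasurableSet {x : EuclideanSpace ℝ ι | ∀ i, x i ∈ s i} := by
  rw [ofPred_forall]
  exact .iInter fun i => measurableSet_preimage (by fun_prop) (hs i)

section SlabBox

variable {d : ℕ} (j : Fin d) (ξ : EuclideanSpace ℝ (Fin d))

def slabBox (a b r : ℝ) : Set (EuclideanSpace ℝ (Fin d)) :=
  {x | ∀ k, x k ∈ Function.update (fun k => Metric.closedBall (ξ k) r) j (Ioc a b) k}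

variable {a b r : ℝ}

theorem measurableSet_slabBox : MeasurableSet (slabBox j ξ a b r) := by
  refine EuclideanSpace.measurableSet_setOf_forall_mem fun k => ?_
  rcases eq_or_ne k j with rfl | hk
  · simp
  · simpa [hk] using Metric.isClosed_closedBall.measurableSet

theorem volume_slabBox :
    volume (slabBox j ξ a b r) = ENNReal.ofReal (b - a) * ENNReal.ofReal (2 * r) ^ (d - 1) := by
  rw [slabBox, EuclideanSpace.volume_setOf_forall_mem,
    Finset.prod_eq_mul_prod_sdiff_singleton_of_mem (Finset.mem_univ j)]
  have hside : ∀ k ∈ Finset.univ \ {j},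
      volume (Function.update (fun k => Metric.closedBall (ξ k) r) j (Ioc a b) k) =
        ENNReal.ofReal (2 * r) := fun k hk => by
    rw [Function.update_of_ne (by simpa using hk), Real.volume_closedBall]
  simp [Finset.prod_congr rfl hside, Finset.card_sdiff]

theorem le_setIntegral_slab_of_le_on_slabBox {u : EuclideanSpace ℝ (Fin d) → ℝ}
    (hu₀ : ∀ x, 0 ≤ u x) (hu : Integrable u) {c : ℝ} (hab : a ≤ b) (hr : 0 ≤ r)
    (hc : ∀ x : EuclideanSpace ℝ (Fin d), x j ∈ Ioc a b → (∀ k, k ≠ j → |x k - ξ k| ≤ r) →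
      c ≤ u x) :
    c * ((b - a) * (2 * r) ^ (d - 1)) ≤ ∫ x in {x | x j ∈ Ioc a b}, u x := by
  have hc_box : ∀ x ∈ slabBox j ξ a b r, c ≤ u x := fun x hx =>
    hc x (by simpa using hx j) fun k hk => by simpa [hk, Real.dist_eq] using hx k
  have hbox_slab : slabBox j ξ a b r ⊆ {x | x j ∈ Ioc a b} := fun x hx => by simpa using hx j
  have hvol := volume_slabBox j ξ (a := a) (b := b) (r := r)
  have hvol_real : volume.real (slabBox j ξ a b r) = (b - a) * (2 * r) ^ (d - 1) := by
    simp [measureReal_def, hvol, hab, hr]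
  calc c * ((b - a) * (2 * r) ^ (d - 1)) ≤ ∫ x in slabBox j ξ a b r, u x := by
        rw [← hvol_real]
        refine setIntegral_ge_of_const_le_real (measurableSet_slabBox j ξ) ?_ hc_box
          hu.integrableOn
        rw [hvol]
        exact ENNReal.mul_ne_top ENNReal.ofReal_ne_top (ENNReal.pow_ne_top ENNReal.ofReal_ne_top)
    _ ≤ _ := setIntegral_mono_set hu.integrableOn (.of_forall hu₀) (.of_forall hbox_slab)

end SlabBox

theorem Real.rpow_neg_div_two_mul_sqrt_pow_sub_one {t : ℝ} (ht : 0 < t) {n : ℕ} (hn : 1 ≤ n) :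
    t ^ (-(n : ℝ) / 2) * √t ^ (n - 1) = (√t)⁻¹ := by
  have : t ^ (-(n : ℝ) / 2) = (√t ^ n)⁻¹ := by
    rw [sqrt_eq_rpow, ← rpow_natCast, ← rpow_mul ht.le, ← rpow_neg ht.le]
    ring_nf
  obtain ⟨m, rfl⟩ := Nat.exists_eq_add_of_le hn
  rw [this, add_tsub_cancel_left, pow_add]
  field_simp

theorem quantile_lipschitz_in_L1_dirac_general
    (d : ℕ)
    (u₁ u₂ : EuclideanSpace ℝ (Fin d) → ℝ)
    (h₁p : ∀ x, 0 < u₁ x)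
    (h₁i : Integrable u₁) (h₂i : Integrable u₂)
    (α : Fin d → ℝ)
    (K δ t : ℝ) (hK : 0 < K) (hδ : 0 < δ) (ht : 0 < t)
    (ξ : EuclideanSpace ℝ (Fin d))
    (j : Fin d)
    (q₁ q₂ : Fin d → ℝ)
    (hq₁ : ∀ i, ∫ x in {x : EuclideanSpace ℝ (Fin d) | x i ≤ q₁ i}, u₁ x = α i)
    (hq₂ : ∀ i, ∫ x in {x : EuclideanSpace ℝ (Fin d) | x i ≤ q₂ i}, u₂ x = α i)
    (hq₁K : |q₁ j - ξ j| ≤ K * Real.sqrt t) (hq₂K : |q₂ j - ξ j| ≤ K * Real.sqrt t)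
    (hlow : ∀ x : EuclideanSpace ℝ (Fin d),
      |x j - ξ j| ≤ K * Real.sqrt t → (∀ k, k ≠ j → |x k - ξ k| ≤ 2 * K * Real.sqrt t) →
      δ * t ^ (-(d : ℝ) / 2) ≤ u₁ x) :
    |q₁ j - q₂ j| ≤ Real.sqrt t * (∫ x, |u₁ x - u₂ x|) / (δ * (4 * K) ^ (d - 1)) := by
  set a := min (q₁ j) (q₂ j)
  set b := max (q₁ j) (q₂ j)
  have hmass_le : ∫ x in {x | x j ∈ Ioc a b}, u₁ x ≤ ∫ x, |u₁ x - u₂ x| :=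
    setIntegral_preimage_Ioc_min_max_le_integral_abs_sub (by fun_prop) h₁i h₂i
      ((hq₁ j).trans (hq₂ j).symm)
  have hmass_ge : δ * t ^ (-(d : ℝ) / 2) * ((b - a) * (2 * (2 * K * √t)) ^ (d - 1)) ≤
      ∫ x in {x | x j ∈ Ioc a b}, u₁ x := by
    refine le_setIntegral_slab_of_le_on_slabBox j ξ (fun x => (h₁p x).le) h₁i min_le_max
      (by positivity) fun x hxj hxk => hlow x ?_ hxk
    have hab_near : ξ j - K * √t ≤ a ∧ b ≤ ξ j + K * √t := by
      constructor <;> simp only [a, b, le_min_iff, max_le_iff] <;> constructor <;>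
        linarith [abs_le.1 hq₁K, abs_le.1 hq₂K]
    exact abs_le.2 ⟨by linarith [hxj.1], by linarith [hxj.2]⟩
  have hpow := rpow_neg_div_two_mul_sqrt_pow_sub_one ht j.pos
  rw [abs_sub_comm, ← max_sub_min_eq_abs, le_div_iff₀ (by positivity)]
  calc (b - a) * (δ * (4 * K) ^ (d - 1))
      = δ * t ^ (-(d : ℝ) / 2) * ((b - a) * (2 * (2 * K * √t)) ^ (d - 1)) * √t := by
        have hsqrt : (√t)⁻¹ * √t = 1 := inv_mul_cancel₀ (sqrt_pos.2 ht).ne'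
        rw [show 2 * (2 * K * √t) = 4 * K * √t by ring, mul_pow]
        linear_combination (-(b - a) * δ * (4 * K) ^ (d - 1) * √t) * hpow -
          (b - a) * δ * (4 * K) ^ (d - 1) * hsqrt
    _ ≤ (∫ x, |u₁ x - u₂ x|) * √t := by gcongr; exact hmass_ge.trans hmass_le
    _ = √t * ∫ x, |u₁ x - u₂ x| := mul_comm _ _

/-- The `√t`-improved Lipschitz estimate for the `j`-th coordinate of the
quantile vector in `L¹`-distance, under the localization properties satisfied by heat kernels
started from the Dirac measure at `ξ`: if both `j`-th quantile coordinates lie within `K√t`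
of `ξ_j` and `u₁ ≥ δ t^{-d/2}` on the slab `{|x_j - ξ_j| ≤ K√t, |x_k - ξ_k| ≤ 2K√t (k ≠ j)}`,
then `|Q_α^j(u₁) - Q_α^j(u₂)| ≤ √t ‖u₁ - u₂‖_{L¹} / (δ (4K)^{d-1})`. -/
theorem quantile_lipschitz_in_L1_dirac
    (d : ℕ) (hd : 1 ≤ d)
    (u₁ u₂ : EuclideanSpace ℝ (Fin d) → ℝ)
    (h₁c : Continuous u₁) (h₂c : Continuous u₂)
    (h₁p : ∀ x, 0 < u₁ x) (h₂p : ∀ x, 0 < u₂ x)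
    (h₁i : Integrable u₁) (h₂i : Integrable u₂)
    (h₁m : ∫ x, u₁ x = 1) (h₂m : ∫ x, u₂ x = 1)
    (α : Fin d → ℝ) (hα : ∀ j, α j ∈ Ioo (0 : ℝ) 1)
    (K δ t : ℝ) (hK : 0 < K) (hδ : 0 < δ) (ht : 0 < t)
    (ξ : EuclideanSpace ℝ (Fin d))
    (j : Fin d)
    (q₁ q₂ : Fin d → ℝ)
    (hq₁ : ∀ i, ∫ x in {x : EuclideanSpace ℝ (Fin d) | x i ≤ q₁ i}, u₁ x = α i)
    (hq₂ : ∀ i, ∫ x in {x : EuclideanSpace ℝ (Fin d) | x i ≤ q₂ i}, u₂ x = α i)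
    (hq₁K : |q₁ j - ξ j| ≤ K * Real.sqrt t) (hq₂K : |q₂ j - ξ j| ≤ K * Real.sqrt t)
    (hlow : ∀ x : EuclideanSpace ℝ (Fin d),
      |x j - ξ j| ≤ K * Real.sqrt t → (∀ k, k ≠ j → |x k - ξ k| ≤ 2 * K * Real.sqrt t) →
      δ * t ^ (-(d : ℝ) / 2) ≤ u₁ x) :
    |q₁ j - q₂ j| ≤ Real.sqrt t * (∫ x, |u₁ x - u₂ x|) / (δ * (4 * K) ^ (d - 1)) :=
  quantile_lipschitz_in_L1_dirac_general d u₁ u₂ h₁p h₁i h₂i α K δ t hK hδ ht ξ j q₁ q₂ hq₁ hq₂ hq₁K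
    hq₂K hlow
end
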